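/- arXiv:1602.00447 — 2 statements merged into one kernel-verified Lean document; each statement's English description precedes it below -/
import Mathlib

section
/- For every positive integer n, a(3,n) ≤ 2 + ⌈log₂ a(2,n)⌉. -/
/-! With `k = a(2,n)` and `c = ⌈log₂ k⌉` we have `A(3, c+1) ≥ 2^(c+1) ≥ k`, so by monotonicity of
the second row `A(3, c+2) = A(2, A(3, c+1)) ≥ A(2, k) > ⌊log₂ n⌋`, i.e. `a(3,n) ≤ c + 2`. -/

/-- The Ackermann function: `A 1 j = 2^j`, `A (i+1) 1 = A i 2`,
`A (i+1) (j+1) = A i (A (i+1) j)` for `i, j ≥ 1`. Values at `i = 0` or `j = 0`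
are irrelevant (set to `0`). -/
def ackFn : ℕ → ℕ → ℕ
  | 0, _ => 0
  | 1, j => 2 ^ j
  | _ + 2, 0 => 0
  | i + 2, 1 => ackFn (i + 1) 2
  | i + 2, j + 2 => ackFn (i + 1) (ackFn (i + 2) (j + 1))
termination_by i j => (i, j)

/-- Row inverse of the Ackermann function: `a(i,n) = min {j ≥ 1 : A(i,j) > ⌊log₂ n⌋}`. -/
noncomputable def ackRowInv (i n : ℕ) : ℕ :=
  sInf {j : ℕ | 1 ≤ j ∧ Nat.log 2 n < ackFn i j}

theorem ackFn_one (j : ℕ) : ackFn 1 j = 2 ^ j := by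
  rw [ackFn]

theorem ackFn_add_two_one (i : ℕ) : ackFn (i + 2) 1 = ackFn (i + 1) 2 := by
  rw [ackFn]

theorem ackFn_add_two_add_two (i j : ℕ) :
    ackFn (i + 2) (j + 2) = ackFn (i + 1) (ackFn (i + 2) (j + 1)) := by
  rw [ackFn]

theorem two_pow_le_ackFn {i j : ℕ} (hi : 1 ≤ i) (hj : 1 ≤ j) : 2 ^ j ≤ ackFn i j := by
  induction i, hi using Nat.le_induction generalizing j with
  | base => rw [ackFn_one]
  | succ i hi ih =>
    obtain ⟨i, rfl⟩ := Nat.exists_eq_add_of_le' hi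
    induction j, hj using Nat.le_induction with
    | base =>
      rw [ackFn_add_two_one]
      exact (Nat.pow_le_pow_right two_pos one_le_two).trans (ih one_le_two)
    | succ j hj ihj =>
      obtain ⟨j, rfl⟩ := Nat.exists_eq_add_of_le' hj
      rw [ackFn_add_two_add_two]
      calc 2 ^ (j + 2) ≤ 2 ^ 2 ^ (j + 1) := Nat.pow_le_pow_right two_pos Nat.lt_two_pow_self
        _ ≤ 2 ^ ackFn (i + 2) (j + 1) := Nat.pow_le_pow_right two_pos ihj
        _ ≤ ackFn (i + 1) (ackFn (i + 2) (j + 1)) := ih ((Nat.one_le_two_pow).trans ihj)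

theorem lt_ackFn {i j : ℕ} (hi : 1 ≤ i) (hj : 1 ≤ j) : j < ackFn i j :=
  Nat.lt_two_pow_self.trans_le (two_pow_le_ackFn hi hj)

theorem ackFn_lt_ackFn_succ {i j : ℕ} (hi : 1 ≤ i) (hj : 1 ≤ j) :
    ackFn i j < ackFn i (j + 1) := by
  obtain ⟨i, rfl⟩ := Nat.exists_eq_add_of_le' hi
  obtain ⟨j, rfl⟩ := Nat.exists_eq_add_of_le' hj
  rcases i with _ | i
  · rw [ackFn_one, ackFn_one]
    exact Nat.pow_lt_pow_right one_lt_two (Nat.lt_succ_self _)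
  · have hpos : 1 ≤ ackFn (i + 2) (j + 1) :=
      hj.trans (lt_ackFn (Nat.le_add_left 1 (i + 1)) hj).le
    rw [ackFn_add_two_add_two]
    exact lt_ackFn (Nat.le_add_left 1 i) hpos

theorem ackFn_le_ackFn {i j k : ℕ} (hi : 1 ≤ i) (hj : 1 ≤ j) (hjk : j ≤ k) :
    ackFn i j ≤ ackFn i k := by
  induction k, hjk using Nat.le_induction with
  | base => exact le_rfl
  | succ k hjk ih => exact ih.trans (ackFn_lt_ackFn_succ hi (hj.trans hjk)).le

theorem ackRowInv_le {i n j : ℕ} (hj : 1 ≤ j) (h : Nat.log 2 n < ackFn i j) :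
    ackRowInv i n ≤ j :=
  Nat.sInf_le ⟨hj, h⟩

theorem ackRowInv_spec {i : ℕ} (hi : 1 ≤ i) (n : ℕ) :
    1 ≤ ackRowInv i n ∧ Nat.log 2 n < ackFn i (ackRowInv i n) :=
  Nat.sInf_mem (s := {j | 1 ≤ j ∧ Nat.log 2 n < ackFn i j}) ⟨Nat.log 2 n + 1,
    Nat.le_add_left 1 _, (Nat.lt_succ_self _).trans (lt_ackFn hi (Nat.le_add_left 1 _))⟩

theorem ackRowInv_three_le_general (n : ℕ) :
    ackRowInv 3 n ≤ 2 + Nat.clog 2 (ackRowInv 2 n) := by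
  set k := ackRowInv 2 n
  set c := Nat.clog 2 k
  obtain ⟨hk, hkn⟩ := ackRowInv_spec (i := 2) (by norm_num) n
  have hk_le : k ≤ ackFn 3 (c + 1) :=
    calc k ≤ 2 ^ c := Nat.le_pow_clog one_lt_two k
      _ ≤ 2 ^ (c + 1) := Nat.pow_le_pow_right two_pos (Nat.le_succ c)
      _ ≤ ackFn 3 (c + 1) := two_pow_le_ackFn (by norm_num) (Nat.le_add_left 1 c)
  rw [add_comm]
  refine ackRowInv_le (Nat.le_add_left 1 _) ?_
  calc Nat.log 2 n < ackFn 2 k := hkn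
    _ ≤ ackFn 2 (ackFn 3 (c + 1)) := ackFn_le_ackFn (by norm_num) hk hk_le
    _ = ackFn 3 (c + 2) := (ackFn_add_two_add_two 1 c).symm

/-- For every positive integer `n`, `a(3,n) ≤ 2 + ⌈log₂ a(2,n)⌉`. -/
theorem ackRowInv_three_le (n : ℕ) (hn : 1 ≤ n) :
    ackRowInv 3 n ≤ 2 + Nat.clog 2 (ackRowInv 2 n) :=
  ackRowInv_three_le_general n
end

section
/- Let w : ℕ → α be a string, t ≥ 1 an integer, and i, j positions such that LCE(i,j) is defined and LCE(i,j) ≥ t. Let Δ be any natural number with Δ ≤ t, let ℓ₂ = t·⌊LCE(i+Δ, j+Δ)/t⌋ and ℓ₃ = min(LCE(i+Δ+ℓ₂, j+Δ+ℓ₂), t). Then LCE(i,j) = Δ + ℓ₂ + ℓ₃. -/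
/-- The set of common-extension lengths of `w` at positions `i` and `j`. -/
def extSet {α : Type*} (w : ℕ → α) (i j : ℕ) : Set ℕ :=
  {ℓ | ∀ d < ℓ, w (i + d) = w (j + d)}

/-- The longest common extension of `w` at `i` and `j`: the greatest element of
`extSet w i j` (when this set is bounded above). -/
noncomputable def LCE {α : Type*} (w : ℕ → α) (i j : ℕ) : ℕ :=
  sSup (extSet w i j)

lemma extSet_mono {α : Type*} (w : ℕ → α) (i j : ℕ) {m ℓ : ℕ} (h : m ≤ ℓ)
    (hℓ : ℓ ∈ extSet w i j) : m ∈ extSet w i j :=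
  fun d hd => hℓ d (lt_of_lt_of_le hd h)

lemma LCE_mem {α : Type*} (w : ℕ → α) (i j : ℕ) (hbdd : BddAbove (extSet w i j)) :
    LCE w i j ∈ extSet w i j :=
  Nat.sSup_mem ⟨0, fun d hd => absurd hd (Nat.not_lt_zero d)⟩ hbdd

lemma LCE_shift {α : Type*} (w : ℕ → α) (i j k : ℕ)
    (hbdd : BddAbove (extSet w i j)) (hk : k ≤ LCE w i j) :
    LCE w (i + k) (j + k) = LCE w i j - k := by
  have hL := LCE_mem w i j hbdd
  have hkmem : k ∈ extSet w i j := extSet_mono w i j hk hL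
  have hiff : ∀ ℓ, ℓ ∈ extSet w (i + k) (j + k) ↔ k + ℓ ∈ extSet w i j := by
    intro ℓ
    constructor
    · intro h d hd
      rcases lt_or_ge d k with h1 | h1
      · exact hkmem d h1
      · obtain ⟨d', rfl⟩ := Nat.exists_eq_add_of_le h1
        have hd' : d' < ℓ := by omega
        have := h d' hd'
        simpa [Nat.add_assoc] using this
    · intro h d hd
      have := h (k + d) (by omega)
      simpa [Nat.add_assoc] using this
  obtain ⟨B, hB⟩ := hbdd
  have hbdd' : BddAbove (extSet w (i + k) (j + k)) := by
    refine ⟨B, fun ℓ hℓ => ?_⟩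
    have := hB ((hiff ℓ).1 hℓ)
    omega
  have hmem' : LCE w i j - k ∈ extSet w (i + k) (j + k) := by
    rw [hiff]
    have heq : k + (LCE w i j - k) = LCE w i j := by omega
    rw [heq]; exact hL
  have hne' : (extSet w (i + k) (j + k)).Nonempty := ⟨_, hmem'⟩
  have h1 : LCE w i j - k ≤ LCE w (i + k) (j + k) := le_csSup hbdd' hmem'
  have h2 : LCE w (i + k) (j + k) ≤ LCE w i j - k := by
    have hm := Nat.sSup_mem hne' hbdd'
    have hmm := (hiff _).1 hm
    have hle : k + LCE w (i + k) (j + k) ≤ LCE w i j := le_csSup ⟨B, hB⟩ hmm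
    omega
  omega

/-- Correctness of the generic LCE algorithm: if `LCE(i,j) ≥ t` and `Δ ≤ t`,
then, with `ℓ₂ = t·⌊LCE(i+Δ,j+Δ)/t⌋` and `ℓ₃ = min(LCE(i+Δ+ℓ₂, j+Δ+ℓ₂), t)`,
we have `LCE(i,j) = Δ + ℓ₂ + ℓ₃`. -/
theorem genericLCE_correct {α : Type*} (w : ℕ → α) (t i j : ℕ) (ht : 1 ≤ t)
    (hbdd : BddAbove (extSet w i j)) (hL : t ≤ LCE w i j)
    (Δ : ℕ) (hΔ : Δ ≤ t) :
    LCE w i j =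
      Δ + t * (LCE w (i + Δ) (j + Δ) / t) +
        min (LCE w (i + Δ + t * (LCE w (i + Δ) (j + Δ) / t))
               (j + Δ + t * (LCE w (i + Δ) (j + Δ) / t))) t := by
  set L := LCE w i j with hLdef
  have h1 : LCE w (i + Δ) (j + Δ) = L - Δ := LCE_shift w i j Δ hbdd (le_trans hΔ hL)
  rw [h1]
  set m := t * ((L - Δ) / t) with hm
  have hdm : m + (L - Δ) % t = L - Δ := Nat.div_add_mod (L - Δ) t
  have hmod : (L - Δ) % t < t := Nat.mod_lt _ ht
  have hle : Δ + m ≤ L := by omega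
  have h2 : LCE w (i + (Δ + m)) (j + (Δ + m)) = L - (Δ + m) :=
    LCE_shift w i j (Δ + m) hbdd hle
  rw [show i + Δ + m = i + (Δ + m) by ring, show j + Δ + m = j + (Δ + m) by ring, h2,
    min_eq_left (by omega)]
  omega
end
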